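/- Let A be a C*-algebra, let Γ be a finite group acting on A by *-automorphisms via α, let A^α be the fixed point subalgebra, and let ω be an ultrafilter on ℕ. Let (v_n)_{n∈ℕ} be a bounded sequence of elements of A^α such that for every b ∈ A^α the norms ‖v_n* v_n b − b‖, ‖v_n v_n* b − b‖, ‖b v_n* v_n − b‖, and ‖b v_n v_n* − b‖ all converge to 0 along ω. Then for every a ∈ A the norms ‖v_n* v_n a − a‖, ‖v_n v_n* a − a‖, ‖a v_n* v_n − a‖, and ‖a v_n v_n* − a‖ all converge to 0 along ω. -/

import Mathlib

/-!
Let `e` be `v_n* v_n` or `v_n v_n*` and `c = a a*`. By the C*-identity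
`‖e a - a‖² = ‖(1 - e) c (1 - e)‖`. The positive element `c` is dominated by the fixed element
`b = ∑_g α_g c`, and compression by `1 - e` preserves order, so
`‖(1 - e) c (1 - e)‖ ≤ ‖(1 - e) b (1 - e)‖ ≤ (1 + ‖e‖) ‖e b - b‖`, which tends to `0` by
hypothesis since `‖e‖` stays bounded. Multiplication on the right reduces to the left case by
taking adjoints.
-/

open Filter Topology

-- `(1 - e) x (1 - e)`, written without a unit
def complCompress {A : Type*} [NonUnitalRing A] (e x : A) : A :=
  x - e * x - x * e + e * x * e

theorem complCompress_sub {A : Type*} [NonUnitalRing A] (e x y : A) :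
    complCompress e (x - y) = complCompress e x - complCompress e y := by
  unfold complCompress; noncomm_ring

section StarOrderedRing

variable {A : Type*} [NonUnitalRing A] [StarRing A] [PartialOrder A] [StarOrderedRing A]

theorem complCompress_nonneg {e x : A} (he : IsSelfAdjoint e) (hx : 0 ≤ x) :
    0 ≤ complCompress e x := by
  rw [StarOrderedRing.nonneg_iff] at hx
  induction hx using AddSubmonoid.closure_induction with
  | mem x hx =>
    obtain ⟨s, rfl⟩ := hx
    have : complCompress e (star s * s) = star (s - s * e) * (s - s * e) := by
      simp only [complCompress, star_sub, star_mul, he.star_eq]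
      noncomm_ring
    exact this ▸ star_mul_self_nonneg _
  | zero => simp [complCompress]
  | add x y _ _ hx hy =>
    have : complCompress e (x + y) = complCompress e x + complCompress e y := by
      unfold complCompress; noncomm_ring
    exact this ▸ add_nonneg hx hy

theorem complCompress_mono {e x y : A} (he : IsSelfAdjoint e) (hxy : x ≤ y) :
    complCompress e x ≤ complCompress e y := by
  rw [← sub_nonneg, ← complCompress_sub]
  exact complCompress_nonneg he (sub_nonneg.mpr hxy)

end StarOrderedRing

theorem norm_complCompress_le {A : Type*} [NonUnitalNormedRing A] (e x : A) :
    ‖complCompress e x‖ ≤ (1 + ‖e‖) * ‖e * x - x‖ :=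
  calc ‖complCompress e x‖ = ‖(e * x - x) * e - (e * x - x)‖ := by
        unfold complCompress; congr 1; noncomm_ring
    _ ≤ ‖e * x - x‖ * ‖e‖ + ‖e * x - x‖ :=
        (norm_sub_le _ _).trans (by gcongr; exact norm_mul_le _ _)
    _ = (1 + ‖e‖) * ‖e * x - x‖ := by ring

section CStarAlgebra

variable {A : Type*} [NonUnitalCStarAlgebra A]

theorem norm_mul_sub_self_sq {e : A} (he : IsSelfAdjoint e) (a : A) :
    ‖e * a - a‖ ^ 2 = ‖complCompress e (a * star a)‖ := by
  rw [sq, ← CStarRing.norm_self_mul_star]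
  congr 1
  simp only [complCompress, star_sub, star_mul, he.star_eq]
  noncomm_ring

variable [PartialOrder A] [StarOrderedRing A]

theorem norm_mul_sub_self_sq_le {e a b : A} (he : IsSelfAdjoint e) (hab : a * star a ≤ b) :
    ‖e * a - a‖ ^ 2 ≤ (1 + ‖e‖) * ‖e * b - b‖ := by
  rw [norm_mul_sub_self_sq he]
  exact (CStarAlgebra.norm_le_norm_of_nonneg_of_le
    (complCompress_nonneg he (mul_star_self_nonneg a)) (complCompress_mono he hab)).trans
    (norm_complCompress_le e b)

theorem tendsto_norm_mul_sub_self_of_le {ι : Type*} {l : Filter ι} {e : ι → A} {K : ℝ}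
    (he : ∀ i, IsSelfAdjoint (e i)) (hK : ∀ i, ‖e i‖ ≤ K) {a b : A} (hab : a * star a ≤ b)
    (hb : Tendsto (fun i => ‖e i * b - b‖) l (𝓝 0)) :
    Tendsto (fun i => ‖e i * a - a‖) l (𝓝 0) := by
  have hsq : Tendsto (fun i => ‖e i * a - a‖ ^ 2) l (𝓝 0) := by
    refine squeeze_zero (fun i => by positivity) (fun i => ?_)
      (by simpa using hb.const_mul (1 + K))
    exact (norm_mul_sub_self_sq_le (he i) hab).trans (by gcongr; exact hK i)
  simpa [Real.sqrt_sq (norm_nonneg _)] using hsq.sqrt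

theorem tendsto_norm_mul_sub_self_of_le' {ι : Type*} {l : Filter ι} {e : ι → A} {K : ℝ}
    (he : ∀ i, IsSelfAdjoint (e i)) (hK : ∀ i, ‖e i‖ ≤ K) {a b : A} (hab : star a * a ≤ b)
    (hb : Tendsto (fun i => ‖e i * b - b‖) l (𝓝 0)) :
    Tendsto (fun i => ‖a * e i - a‖) l (𝓝 0) := by
  have := tendsto_norm_mul_sub_self_of_le he hK (a := star a) (by rwa [star_star]) hb
  simpa only [← norm_star (_ - a), star_sub, star_mul, (he _).star_eq] using this

end CStarAlgebra

section OrbitSum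

variable {Γ R A : Type*} [Group Γ] [Fintype Γ] [CommSemiring R] [NonUnitalSemiring A]
  [StarRing A] [Module R A]

def orbitSum (α : Γ → A ≃⋆ₐ[R] A) (x : A) : A := ∑ g, α g x

theorem apply_orbitSum {α : Γ → A ≃⋆ₐ[R] A}
    (hmul : ∀ g g' : Γ, ∀ a : A, α (g * g') a = α g (α g' a)) (g : Γ) (x : A) :
    α g (orbitSum α x) = orbitSum α x := by
  simp only [orbitSum, map_sum, ← hmul]
  exact Equiv.sum_comp (Equiv.mulLeft g) (fun h => α h x)

theorem le_orbitSum [PartialOrder A] [StarOrderedRing A] {α : Γ → A ≃⋆ₐ[R] A}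
    (hone : ∀ a : A, α 1 a = a) {x : A} (hx : 0 ≤ x) : x ≤ orbitSum α x := by
  simpa only [orbitSum, hone] using
    Finset.single_le_sum (fun g _ => map_nonneg (α g) hx) (Finset.mem_univ (1 : Γ))

end OrbitSum

theorem stmt3_general {A : Type*} [NonUnitalNormedRing A] [StarRing A] [CStarRing A]
    [PartialOrder A] [StarOrderedRing A] [CompleteSpace A]
    [NormedSpace ℂ A] [IsScalarTower ℂ A A] [SMulCommClass ℂ A A] [StarModule ℂ A]
    {Γ : Type*} [Group Γ] [Finite Γ]
    (α : Γ → (A ≃⋆ₐ[ℂ] A))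
    (hone : ∀ a : A, α 1 a = a)
    (hmul : ∀ g g' : Γ, ∀ a : A, α (g * g') a = α g (α g' a))
    (ω : Ultrafilter ℕ)
    (v : ℕ → A)
    (hbdd : ∃ C : ℝ, ∀ n, ‖v n‖ ≤ C)
    (happrox : ∀ b : A, (∀ g : Γ, α g b = b) →
      Tendsto (fun n => ‖star (v n) * v n * b - b‖) (ω : Filter ℕ) (nhds 0) ∧
      Tendsto (fun n => ‖v n * star (v n) * b - b‖) (ω : Filter ℕ) (nhds 0) ∧
      Tendsto (fun n => ‖b * (star (v n) * v n) - b‖) (ω : Filter ℕ) (nhds 0) ∧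
      Tendsto (fun n => ‖b * (v n * star (v n)) - b‖) (ω : Filter ℕ) (nhds 0)) :
    ∀ a : A,
      Tendsto (fun n => ‖star (v n) * v n * a - a‖) (ω : Filter ℕ) (nhds 0) ∧
      Tendsto (fun n => ‖v n * star (v n) * a - a‖) (ω : Filter ℕ) (nhds 0) ∧
      Tendsto (fun n => ‖a * (star (v n) * v n) - a‖) (ω : Filter ℕ) (nhds 0) ∧
      Tendsto (fun n => ‖a * (v n * star (v n)) - a‖) (ω : Filter ℕ) (nhds 0) := by
  intro a
  let _ : NonUnitalCStarAlgebra A := { }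
  have : Fintype Γ := Fintype.ofFinite Γ
  obtain ⟨C, hC⟩ := hbdd
  have hC₁ (n : ℕ) : ‖star (v n) * v n‖ ≤ C * C := by
    rw [CStarRing.norm_star_mul_self]; exact mul_self_le_mul_self (norm_nonneg _) (hC n)
  have hC₂ (n : ℕ) : ‖v n * star (v n)‖ ≤ C * C := by
    rw [CStarRing.norm_self_mul_star]; exact mul_self_le_mul_self (norm_nonneg _) (hC n)
  have hsa₁ (n : ℕ) := IsSelfAdjoint.star_mul_self (v n)
  have hsa₂ (n : ℕ) := IsSelfAdjoint.mul_star_self (v n)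
  have hle₁ := le_orbitSum hone (mul_star_self_nonneg a)
  have hle₂ := le_orbitSum hone (star_mul_self_nonneg a)
  obtain ⟨h₁, h₂, -, -⟩ := happrox _ (apply_orbitSum hmul · (a * star a))
  obtain ⟨h₃, h₄, -, -⟩ := happrox _ (apply_orbitSum hmul · (star a * a))
  exact ⟨tendsto_norm_mul_sub_self_of_le hsa₁ hC₁ hle₁ h₁,
    tendsto_norm_mul_sub_self_of_le hsa₂ hC₂ hle₁ h₂,
    tendsto_norm_mul_sub_self_of_le' hsa₁ hC₁ hle₂ h₃,
    tendsto_norm_mul_sub_self_of_le' hsa₂ hC₂ hle₂ h₄⟩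

/-- If `Γ` is a finite group acting on a C*-algebra `A` by
*-automorphisms, `ω` is an ultrafilter on `ℕ`, and `(v_n)` is a bounded sequence
in the fixed point subalgebra `A^α` such that `v_n* v_n b → b`, `v_n v_n* b → b`,
`b v_n* v_n → b`, `b v_n v_n* → b` (in norm, along `ω`) for every `b ∈ A^α`, then
the same convergences hold for every `a ∈ A`. -/
theorem stmt3 {A : Type*} [NonUnitalNormedRing A] [StarRing A] [CStarRing A]
    [PartialOrder A] [StarOrderedRing A] [CompleteSpace A]
    [NormedSpace ℂ A] [IsScalarTower ℂ A A] [SMulCommClass ℂ A A] [StarModule ℂ A]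
    {Γ : Type*} [Group Γ] [Finite Γ]
    (α : Γ → (A ≃⋆ₐ[ℂ] A))
    (hone : ∀ a : A, α 1 a = a)
    (hmul : ∀ g g' : Γ, ∀ a : A, α (g * g') a = α g (α g' a))
    (ω : Ultrafilter ℕ)
    (v : ℕ → A)
    (hbdd : ∃ C : ℝ, ∀ n, ‖v n‖ ≤ C)
    (hfix : ∀ n, ∀ g : Γ, α g (v n) = v n)
    (happrox : ∀ b : A, (∀ g : Γ, α g b = b) →
      Tendsto (fun n => ‖star (v n) * v n * b - b‖) (ω : Filter ℕ) (nhds 0) ∧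
      Tendsto (fun n => ‖v n * star (v n) * b - b‖) (ω : Filter ℕ) (nhds 0) ∧
      Tendsto (fun n => ‖b * (star (v n) * v n) - b‖) (ω : Filter ℕ) (nhds 0) ∧
      Tendsto (fun n => ‖b * (v n * star (v n)) - b‖) (ω : Filter ℕ) (nhds 0)) :
    ∀ a : A,
      Tendsto (fun n => ‖star (v n) * v n * a - a‖) (ω : Filter ℕ) (nhds 0) ∧
      Tendsto (fun n => ‖v n * star (v n) * a - a‖) (ω : Filter ℕ) (nhds 0) ∧
      Tendsto (fun n => ‖a * (star (v n) * v n) - a‖) (ω : Filter ℕ) (nhds 0) ∧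
      Tendsto (fun n => ‖a * (v n * star (v n)) - a‖) (ω : Filter ℕ) (nhds 0) :=
  stmt3_general α hone hmul ω v hbdd happrox
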